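/- Explicit coefficient formula: D_n(x|a_1,…,a_r) = ∑_{j=0}^n ( ∑_{l=j}^n C(n,l) S_1(l,j) D_{n-l}(a_1,…,a_r) ) x^j, i.e., the coefficient of x^j in D_n(x|a_1,…,a_r) equals ∑_{l=j}^n C(n,l) S_1(l,j) D_{n-l}(a_1,…,a_r). -/

import Mathlib

open Finset PowerSeries

/-- Exponential generating function: `∑ f n * t^n / n!`. -/
noncomputable def egf (f : ℕ → ℚ) : PowerSeries ℚ :=
  PowerSeries.mk fun n => f n / n.factorial

/-- The formal power series `log(1+t) = ∑_{m≥1} (-1)^{m-1} t^m / m`. -/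
noncomputable def log1p : PowerSeries ℚ :=
  PowerSeries.mk fun n => if n = 0 then 0 else (-1) ^ (n - 1) / n

/-- Formal exponential composition: for `f` with zero constant term this is
`exp(f) = ∑_k f^k / k!` (the sum in each coefficient is finite). -/
noncomputable def expPS (f : PowerSeries ℚ) : PowerSeries ℚ :=
  PowerSeries.mk fun n =>
    ∑ k ∈ Finset.range (n + 1), (PowerSeries.coeff n (f ^ k)) / k.factorial

/-- `(1+t)^a := exp(a · log(1+t))` as a formal power series. -/
noncomputable def onePow (a : ℚ) : PowerSeries ℚ := expPS (PowerSeries.C a * log1p)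

/-- `e^{a t} = ∑ a^n t^n / n!`. -/
noncomputable def expAt (a : ℚ) : PowerSeries ℚ :=
  PowerSeries.mk fun n => a ^ n / n.factorial

/-- Falling factorial `(x)_n = x(x-1)⋯(x-n+1)`. -/
noncomputable def ffall (x : ℚ) (n : ℕ) : ℚ := ∏ i ∈ Finset.range n, (x - i)

/-!
`(1+t)^x = exp(x log(1+t))` satisfies `(1+t) f' = x f`, so its coefficients are `(x)_n / n!`:
it is the exponential generating function of the falling factorials, and `(1+t)^0 = 1`.
Cancelling the nonzero product `∏ ((1+t)^{a_j} - 1)` between the defining identities at `x` and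
at `0` gives `egf(D(x)) = (1+t)^x · egf(D(0))`, i.e. `D_n(x) = ∑_l C(n,l) (x)_l D_{n-l}`.
Writing `(x)_l = ∑_j S_1(l,j) x^j` and comparing coefficients of polynomials gives the formula.
-/

lemma coeff_pow_eq_zero_of_lt {R : Type*} [CommSemiring R] {f : R⟦X⟧} (hf : constantCoeff f = 0)
    {n k : ℕ} (h : n < k) : coeff n (f ^ k) = 0 :=
  X_pow_dvd_iff.1 (pow_dvd_pow_of_dvd (X_dvd_iff.2 hf) k) n h

lemma expPS_eq_subst_exp {f : ℚ⟦X⟧} (hf : constantCoeff f = 0) : expPS f = (exp ℚ).subst f := by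
  ext n
  rw [expPS, coeff_mk, coeff_subst' (HasSubst.of_constantCoeff_zero' hf),
    finsum_eq_sum_of_support_subset (s := range (n + 1))]
  · refine sum_congr rfl fun k _ => ?_
    simp [coeff_exp, div_eq_inv_mul]
  · intro k hk
    by_contra h
    simp only [Function.mem_support, coe_range, Set.mem_Iio] at hk h
    exact hk (by rw [coeff_pow_eq_zero_of_lt hf (by omega), smul_zero])

lemma coeff_one_add_X_mul_derivative {R : Type*} [CommSemiring R] (f : R⟦X⟧) (n : ℕ) :
    coeff n ((1 + X) * d⁄dX R f) = (n + 1) * coeff (n + 1) f + n * coeff n f := by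
  rcases n with _ | n
  · rw [add_mul, one_mul, map_add, coeff_zero_X_mul, coeff_derivative]
    simp
  · rw [add_mul, one_mul, map_add, coeff_succ_X_mul, coeff_derivative, coeff_derivative]
    push_cast
    ring

lemma one_add_X_mul_derivative_log1p : (1 + X) * d⁄dX ℚ log1p = 1 := by
  ext n
  rw [coeff_one_add_X_mul_derivative, log1p, coeff_mk, coeff_mk, coeff_one]
  rcases n with _ | n
  · simp
  · simp only [Nat.cast_add, Nat.cast_one, Nat.add_eq_zero_iff, one_ne_zero, and_false,
      ↓reduceIte, add_tsub_cancel_right]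
    field_simp
    ring

lemma one_add_X_mul_derivative_onePow (x : ℚ) :
    (1 + X) * d⁄dX ℚ (onePow x) = C x * onePow x := by
  have hF : constantCoeff (C x * log1p) = 0 := by simp [log1p, ← coeff_zero_eq_constantCoeff]
  rw [onePow, expPS_eq_subst_exp hF, derivative_subst (HasSubst.of_constantCoeff_zero' hF),
    derivative_exp, Derivation.leibniz, derivative_C, smul_zero, add_zero, smul_eq_mul]
  linear_combination (C x * (exp ℚ).subst (C x * log1p)) * one_add_X_mul_derivative_log1p

lemma coeff_onePow (x : ℚ) (n : ℕ) : coeff n (onePow x) = ffall x n / n.factorial := by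
  induction n with
  | zero => simp [onePow, expPS, ffall]
  | succ n ih =>
    have h := congrArg (coeff n) (one_add_X_mul_derivative_onePow x)
    rw [coeff_one_add_X_mul_derivative, coeff_C_mul, ih] at h
    rw [ffall, prod_range_succ, ← ffall, Nat.factorial_succ]
    field_simp at h
    push_cast
    rw [eq_div_iff (by positivity)]
    linear_combination h

lemma onePow_eq_egf_ffall (x : ℚ) : onePow x = egf (ffall x) := by
  ext n
  rw [coeff_onePow, egf, coeff_mk]

lemma onePow_zero : onePow 0 = 1 := by
  ext n
  rw [coeff_onePow, coeff_one]
  rcases n with _ | n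
  · simp [ffall]
  · simp [ffall, prod_range_succ']

lemma onePow_sub_one_ne_zero {a : ℚ} (ha : a ≠ 0) : onePow a - 1 ≠ 0 := by
  intro h
  simpa [coeff_onePow, ffall, ha] using congrArg (coeff 1) h

lemma egf_injective : Function.Injective egf := by
  intro f g h
  funext n
  have hn := congrArg (coeff n) h
  rwa [egf, egf, coeff_mk, coeff_mk, div_left_inj' (by positivity)] at hn

lemma egf_mul (f g : ℕ → ℚ) :
    egf f * egf g = egf fun n => ∑ l ∈ range (n + 1), (n.choose l : ℚ) * f l * g (n - l) := by
  ext n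
  rw [coeff_mul, Nat.sum_antidiagonal_eq_sum_range_succ_mk, egf, egf, egf, coeff_mk, sum_div]
  refine sum_congr rfl fun l hl => ?_
  rw [coeff_mk, coeff_mk, Nat.cast_choose ℚ (Nat.lt_succ_iff.1 (mem_range.1 hl))]
  field_simp

lemma eval_eq_sum_choose_mul_ffall {P Q : ℚ⟦X⟧} (hP : P ≠ 0) {D : ℕ → Polynomial ℚ}
    (hD : ∀ x : ℚ, P * egf (fun n => (D n).eval x) = Q * onePow x) (x : ℚ) (n : ℕ) :
    (D n).eval x = ∑ l ∈ range (n + 1), (n.choose l : ℚ) * ffall x l * (D (n - l)).eval 0 := by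
  have hx : egf (fun n => (D n).eval x) = egf (ffall x) * egf (fun n => (D n).eval 0) := by
    refine mul_left_cancel₀ hP ?_
    rw [hD x, mul_left_comm, hD 0, onePow_zero, ← onePow_eq_egf_ffall]
    ring
  rw [egf_mul] at hx
  exact congrFun (egf_injective hx) n

lemma descPochhammer_eval_eq_ffall (l : ℕ) (x : ℚ) : (descPochhammer ℚ l).eval x = ffall x l :=
  descPochhammer_eval_eq_prod_range l x

lemma coeff_descPochhammer_of_ffall_eq {l : ℕ} {S : ℕ → ℚ}
    (hS : ∀ x : ℚ, ffall x l = ∑ j ∈ range (l + 1), S j * x ^ j) (j : ℕ) :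
    (descPochhammer ℚ l).coeff j = if j ≤ l then S j else 0 := by
  have h : descPochhammer ℚ l = ∑ i ∈ range (l + 1), Polynomial.C (S i) * Polynomial.X ^ i :=
    Polynomial.funext fun x => by
      simp [descPochhammer_eval_eq_ffall, hS, Polynomial.eval_finsetSum]
  simp [h, Polynomial.finsetSum_coeff, Polynomial.coeff_C_mul, Polynomial.coeff_X_pow]

theorem stmt18 (r : ℕ) (a : Fin r → ℚ) (ha : ∀ j, a j ≠ 0) (D : ℕ → Polynomial ℚ)
    (hD : ∀ x : ℚ, (∏ j, (onePow (a j) - 1)) * egf (fun n => (D n).eval x) = log1p ^ r * onePow x)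
    (S1 : ℕ → ℕ → ℚ) (hS1 : ∀ (l : ℕ) (x : ℚ), ffall x l = ∑ j ∈ Finset.range (l + 1), S1 l j * x ^ j)
    (n j : ℕ) :
    (D n).coeff j = ∑ l ∈ Finset.Icc j n, (n.choose l : ℚ) * S1 l j * (D (n - l)).eval 0 := by
  have hP : ∏ i, (onePow (a i) - 1) ≠ 0 :=
    prod_ne_zero_iff.2 fun i _ => onePow_sub_one_ne_zero (ha i)
  have hDn : D n = ∑ l ∈ range (n + 1),
      Polynomial.C ((n.choose l : ℚ) * (D (n - l)).eval 0) * descPochhammer ℚ l :=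
    Polynomial.funext fun x => by
      rw [eval_eq_sum_choose_mul_ffall hP hD, Polynomial.eval_finsetSum]
      simp only [Polynomial.eval_mul, Polynomial.eval_C, descPochhammer_eval_eq_ffall]
      exact sum_congr rfl fun l _ => by ring
  have hIcc : (range (n + 1)).filter (j ≤ ·) = Icc j n := by
    ext l
    simp only [mem_filter, mem_range, mem_Icc]
    omega
  simp only [hDn, Polynomial.finsetSum_coeff, Polynomial.coeff_C_mul,
    coeff_descPochhammer_of_ffall_eq (hS1 _), mul_ite, mul_zero, ← sum_filter, hIcc]
  exact sum_congr rfl fun l _ => by ring
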